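/- arXiv:2602.23167 — 2 statements merged into one kernel-verified Lean document; each statement's English description precedes it below -/
import Mathlib

section
/- Soundness of the IsZero gadget: let F be a field and x, inv, y elements of F. If x·inv = 1 − y and x·y = 0, then y ∈ {0, 1}, and moreover y = 1 if and only if x = 0 (equivalently, y = 0 if and only if x ≠ 0). -/
/-- Soundness of the IsZero gadget: if `x·inv = 1 − y` and `x·y = 0` over a
field, then `y` is a bit, `y = 1` iff `x = 0`, and `y = 0` iff `x ≠ 0`. -/
theorem isZero_soundness {F : Type*} [Field F] (x inv y : F)
    (h1 : x * inv = 1 - y) (h2 : x * y = 0) :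
    (y = 0 ∨ y = 1) ∧ (y = 1 ↔ x = 0) ∧ (y = 0 ↔ x ≠ 0) := by
  rcases mul_eq_zero.mp h2 with hx | hy
  · subst hx
    simp at h1
    have hy : y = 1 := by linear_combination h1
    subst hy
    exact ⟨Or.inr rfl, by simp, by simp⟩
  · subst hy
    have hx : x ≠ 0 := by
      intro h; rw [h] at h1; simp at h1
    exact ⟨Or.inl rfl, ⟨fun h => by simp_all, fun h => absurd h hx⟩, by simp [hx]⟩
end

section
/- Correctness of the BatchExtractor gadget: let F be a commutative ring, N and B positive natural numbers, t = ⌈N/B⌉, x : {0,…,N−1} → F, and a a natural number with a < t. Define e_i ∈ F for i < t by e_i = 1 if i = a and e_i = 0 otherwise; for 0 ≤ k < t·B with i = ⌊k/B⌋ and j = k mod B, define S[i][j] = x_k·e_i if k < N and S[i][j] = 0 otherwise; and define y_j = Σ_{i<t} S[i][j] for j < B. Then for every j < B with a·B + j < N one has y_j = x_{a·B + j}, and y_j = 0 whenever a·B + j ≥ N. -/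
/-- Correctness of the BatchExtractor gadget: with one-hot selectors
`e i = 1[i = a]` and selection matrix `S`, the column sums `y j` recover the
`a`-th batch of `x`, i.e. `y j = x (a·B + j)` when `a·B + j < N` and
`y j = 0` otherwise. -/
theorem batchExtractor_correct
    {F : Type*} [CommRing F]
    (N B : ℕ) (hN : 0 < N) (hB : 0 < B)
    (x : Fin N → F) (a : ℕ) (ha : a < (N + B - 1) / B) :
    let t := (N + B - 1) / B
    let e : ℕ → F := fun i => if i = a then 1 else 0
    let S : ℕ → ℕ → F := fun i j =>
      if h : i * B + j < N then x ⟨i * B + j, h⟩ * e i else 0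
    let y : ℕ → F := fun j => ∑ i ∈ Finset.range t, S i j
    ∀ j < B,
      (∀ h : a * B + j < N, y j = x ⟨a * B + j, h⟩) ∧
      (N ≤ a * B + j → y j = 0) := by
  intro t e S y j hj
  have hsum : y j = S a j := by
    apply Finset.sum_eq_single a
    · intro b _ hb
      simp only [S, e, if_neg hb, mul_zero, dite_eq_ite, ite_self]
    · intro h
      exact absurd (Finset.mem_range.mpr ha) h
  constructor
  · intro h
    simp [hsum, S, e, h]
  · intro h
    simp [hsum, S, Nat.not_lt.mpr h]
end
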